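/- arXiv:2102.06833 — 2 statements merged into one kernel-verified Lean document; each statement's English description precedes it below -/
import Mathlib

section
/- Let G be a finite group, H a normal subgroup of G, and K a subgroup of G. Fix an integer m ≥ 1 and two tuples a = (a₁, …, a_m), b = (b₁, …, b_m) ∈ G^m with a₁ a₂ ⋯ a_m = b₁ b₂ ⋯ b_m. For a tuple c ∈ G^m let S_c be the set of (g₁, …, g_m) ∈ G^m with g_i ∈ c_i H for all i and g₁ ⋯ g_m ∈ K. Then |S_a| = |S_b|, and if a_i H ≠ b_i H for some index i, then S_a and S_b are disjoint. -/
open scoped Pointwise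

section Aux
variable {G : Type*} [Group G]

lemma prod_mem_smul (H : Subgroup G) [H.Normal] {l₁ l₂ : List G}
    (h : List.Forall₂ (fun x c => x ∈ c • (H : Set G)) l₁ l₂) :
    l₁.prod ∈ l₂.prod • (H : Set G) := by
  induction h with
  | nil => simp only [List.prod_nil, Set.mem_smul_set_iff_inv_smul_mem, smul_eq_mul,
      mul_one, inv_one, SetLike.mem_coe]; exact one_mem H
  | @cons x c l₁ l₂ hx _ ih =>
    rw [Set.mem_smul_set_iff_inv_smul_mem] at *
    simp only [List.prod_cons, smul_eq_mul] at *
    have : (c * l₂.prod)⁻¹ * (x * l₁.prod) =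
        (l₂.prod⁻¹ * (c⁻¹ * x) * l₂.prod⁻¹⁻¹) * (l₂.prod⁻¹ * l₁.prod) := by group
    rw [this]
    exact mul_mem (Subgroup.Normal.conj_mem ‹H.Normal› _ hx _) ih

/-- The pushing map. -/
def phi {n : ℕ} (a b : Fin (n + 1) → G) (g : Fin (n + 1) → G) : Fin (n + 1) → G :=
  Fin.cons
    ((List.ofFn g).prod *
      ((List.ofFn fun i : Fin n => b i.succ * (a i.succ)⁻¹ * g i.succ).prod)⁻¹)
    (fun i => b i.succ * (a i.succ)⁻¹ * g i.succ)

lemma phi_prod {n : ℕ} (a b : Fin (n + 1) → G) (g : Fin (n + 1) → G) :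
    (List.ofFn (phi a b g)).prod = (List.ofFn g).prod := by
  rw [List.ofFn_succ]
  simp [phi]

lemma phi_invol {n : ℕ} (a b : Fin (n + 1) → G) (g : Fin (n + 1) → G) :
    phi b a (phi a b g) = g := by
  have htail : (fun i : Fin n => a i.succ * (b i.succ)⁻¹ * (phi a b g) i.succ)
      = fun i => g i.succ := by
    funext i
    simp [phi, mul_assoc]
  funext i
  induction i using Fin.cases with
  | zero =>
    show ((List.ofFn (phi a b g)).prod * _) = g 0
    rw [phi_prod, htail, List.ofFn_succ (f := g)]
    simp [mul_assoc]
  | succ i =>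
    show a i.succ * (b i.succ)⁻¹ * (phi a b g) i.succ = g i.succ
    exact congrFun htail i

lemma phi_mapsTo {n : ℕ} (H K : Subgroup G) [H.Normal] (a b : Fin (n + 1) → G)
    (hab : (List.ofFn a).prod = (List.ofFn b).prod) :
    Set.MapsTo (phi a b)
      {g : Fin (n+1) → G | (∀ i, g i ∈ a i • (H : Set G)) ∧ (List.ofFn g).prod ∈ K}
      {g : Fin (n+1) → G | (∀ i, g i ∈ b i • (H : Set G)) ∧ (List.ofFn g).prod ∈ K} := by
  rintro g ⟨hg, hgK⟩
  have htail : ∀ i : Fin n, b i.succ * (a i.succ)⁻¹ * g i.succ ∈ b i.succ • (H : Set G) := by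
    intro i
    rw [Set.mem_smul_set_iff_inv_smul_mem]
    have := hg i.succ
    rw [Set.mem_smul_set_iff_inv_smul_mem] at this
    simpa [mul_assoc] using this
  refine ⟨fun i => ?_, by rw [phi_prod]; exact hgK⟩
  induction i using Fin.cases with
  | succ i => exact htail i
  | zero =>
    show (List.ofFn g).prod * _ ∈ _
    -- products
    set T' := (List.ofFn fun i : Fin n => b i.succ * (a i.succ)⁻¹ * g i.succ).prod with hT'
    set Tb := (List.ofFn fun i : Fin n => b i.succ).prod with hTb
    have hPa : (List.ofFn g).prod ∈ (List.ofFn a).prod • (H : Set G) := by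
      apply prod_mem_smul
      rw [List.forall₂_iff_get]
      refine ⟨by simp, fun i h1 h2 => ?_⟩
      simp only [List.get_ofFn]
      exact hg _
    have hT'mem : T' ∈ Tb • (H : Set G) := by
      apply prod_mem_smul
      rw [List.forall₂_iff_get]
      refine ⟨by simp, fun i h1 h2 => ?_⟩
      simp only [List.get_ofFn]
      exact htail _
    rw [Set.mem_smul_set_iff_inv_smul_mem] at *
    have hb : (List.ofFn a).prod = b 0 * Tb := by
      rw [hab, List.ofFn_succ]; simp [hTb]
    rw [hb] at hPa
    have : (b 0)⁻¹ • ((List.ofFn g).prod * T'⁻¹) =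
        Tb * (((b 0 * Tb)⁻¹ * (List.ofFn g).prod) * (Tb⁻¹ * T')⁻¹) * Tb⁻¹ := by
      simp only [smul_eq_mul]; group
    rw [this]
    exact Subgroup.Normal.conj_mem ‹H.Normal› _
      (mul_mem hPa (inv_mem hT'mem)) _

end Aux

/-- Group-theoretic content of Lemma 4.4 ('fproperties'): for a finite group `G`,
normal subgroup `H`, subgroup `K`, and tuples `a, b` of length `m ≥ 1` with equal
products, the sets `S_a` and `S_b` of tuples `g` with `g i ∈ (a i) H` (resp. `(b i) H`)
and product in `K` have equal cardinality; moreover, if `a i H ≠ b i H` for some `i`,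
then `S_a` and `S_b` are disjoint. -/
theorem stmt1 {G : Type*} [Group G] [Fintype G]
    (H K : Subgroup G) [H.Normal]
    (m : ℕ) (hm : 1 ≤ m) (a b : Fin m → G)
    (hab : (List.ofFn a).prod = (List.ofFn b).prod) :
    Nat.card {g : Fin m → G |
        (∀ i, g i ∈ a i • (H : Set G)) ∧ (List.ofFn g).prod ∈ K} =
      Nat.card {g : Fin m → G |
        (∀ i, g i ∈ b i • (H : Set G)) ∧ (List.ofFn g).prod ∈ K} ∧
    ((∃ i, a i • (H : Set G) ≠ b i • (H : Set G)) →
      Disjoint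
        {g : Fin m → G |
          (∀ i, g i ∈ a i • (H : Set G)) ∧ (List.ofFn g).prod ∈ K}
        {g : Fin m → G |
          (∀ i, g i ∈ b i • (H : Set G)) ∧ (List.ofFn g).prod ∈ K}) := by
  constructor
  · obtain ⟨n, rfl⟩ : ∃ n, m = n + 1 := ⟨m - 1, by omega⟩
    have hbij : Set.BijOn (phi a b)
        {g : Fin (n+1) → G | (∀ i, g i ∈ a i • (H : Set G)) ∧ (List.ofFn g).prod ∈ K}
        {g : Fin (n+1) → G | (∀ i, g i ∈ b i • (H : Set G)) ∧ (List.ofFn g).prod ∈ K} := by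
      refine Set.InvOn.bijOn ⟨fun g _ => phi_invol a b g, fun g _ => phi_invol b a g⟩
        (phi_mapsTo H K a b hab) (phi_mapsTo H K b a hab.symm)
    exact Nat.card_congr (hbij.equiv _)
  · rintro ⟨i, hi⟩
    rw [Set.disjoint_left]
    rintro g ⟨hga, -⟩ ⟨hgb, -⟩
    apply hi
    have h1 := (hga i); have h2 := (hgb i)
    rw [Set.mem_smul_set_iff_inv_smul_mem] at h1 h2
    rw [leftCoset_eq_iff]
    rw [smul_eq_mul] at h1 h2
    have h3 : (a i)⁻¹ * b i = ((a i)⁻¹ * g i) * ((b i)⁻¹ * g i)⁻¹ := by group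
    rw [h3]
    exact mul_mem h1 (inv_mem h2)
end

section
/- Let n ≥ 2. Among all strictly upper-triangular n×n matrices with entries in {0,1}, the number of matrices A for which the number of directed paths from vertex 1 to vertex n is odd equals the number of matrices for which it is even; both counts equal 2^{n(n−1)/2 − 1}. -/
/-!
Flipping the entry `(0, n-1)` is an involution on strictly upper-triangular Boolean matrices.
The corresponding elementary matrix `E` satisfies `E N = N E = E E = 0` for every strictly
upper-triangular `N`, so `(N + E)^k = N^k` for `k ≥ 2`; hence the flip changes only the
`k = 1` term of the path count, by exactly one, and swaps the odd and even classes.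
Both classes therefore have half of the `2^(n(n-1)/2)` matrices.
-/

/-- Decidability of the monotonicity condition on a Boolean matrix (instance search no longer
finds it through the `Matrix` type synonym). -/
instance instDecidableMonotoneRow (n : ℕ) (A : Matrix (Fin n) (Fin n) Bool) (a : Fin n) :
    DecidablePred fun j : Fin n => A a j = true → a < j :=
  fun _ => inferInstance

open Finset Matrix

theorem add_pow_add_two_of_mul_eq_zero {R : Type*} [Semiring R] {N E : R} (hEN : E * N = 0)
    (hNE : N * E = 0) (hEE : E * E = 0) (k : ℕ) : (N + E) ^ (k + 2) = N ^ (k + 2) := by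
  induction k with
  | zero => simp [sq, add_mul, mul_add, hEN, hNE, hEE]
  | succ k ih =>
    have hNE' : N ^ (k + 2) * E = 0 := by rw [pow_succ, mul_assoc, hNE, mul_zero]
    rw [pow_succ, ih, mul_add, hNE', add_zero, ← pow_succ]

theorem card_filter_and_odd_add_card_filter_and_even {α : Type*} (s : Finset α) (p : α → Prop)
    [DecidablePred p] (f : α → ℕ) :
    #{x ∈ s | p x ∧ Odd (f x)} + #{x ∈ s | p x ∧ Even (f x)} = #{x ∈ s | p x} := by
  rw [← filter_filter, ← filter_filter]
  simp_rw [← Nat.not_odd_iff_even]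
  exact card_filter_add_card_filter_not _

section StrictlyUpperTriangular

variable {ι R : Type*} [Fintype ι] [DecidableEq ι] [Preorder ι] [Semiring R]
  {N : Matrix ι ι R} {a b : ι}

theorem single_mul_eq_zero_of_isTop (hN : ∀ i j, ¬i < j → N i j = 0) (hb : IsTop b) (c : R) :
    single a b c * N = 0 := by
  ext i j
  by_cases hi : i = a
  · rw [hi, single_mul_apply_same, hN b j (hb j).not_gt, mul_zero, Matrix.zero_apply]
  · exact single_mul_apply_of_ne _ _ _ _ _ hi _

theorem mul_single_eq_zero_of_isBot (hN : ∀ i j, ¬i < j → N i j = 0) (ha : IsBot a) (c : R) :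
    N * single a b c = 0 := by
  ext i j
  by_cases hj : j = b
  · rw [hj, mul_single_apply_same, hN i a (ha i).not_gt, zero_mul, Matrix.zero_apply]
  · exact mul_single_apply_of_ne _ _ _ _ _ hj _

theorem sum_pow_add_single_apply (hN : ∀ i j, ¬i < j → N i j = 0) (ha : IsBot a) (hb : IsTop b)
    (hab : a ≠ b) (c : R) {K : Finset ℕ} (h0 : 0 ∉ K) (h1 : 1 ∈ K) :
    ∑ k ∈ K, ((N + single a b c) ^ k) a b = ∑ k ∈ K, (N ^ k) a b + c := by
  have hterm : ∀ k ∈ K,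
      ((N + single a b c) ^ k) a b = (N ^ k) a b + if k = 1 then c else 0 := by
    intro k hk
    match k, hk with
    | 0, hk => exact absurd hk h0
    | 1, _ => simp
    | k + 2, _ =>
      rw [add_pow_add_two_of_mul_eq_zero (single_mul_eq_zero_of_isTop hN hb c)
        (mul_single_eq_zero_of_isBot hN ha c) (single_mul_single_of_ne c a b a hab.symm c),
        if_neg (by omega), add_zero]
  rw [sum_congr rfl hterm, sum_add_distrib, sum_ite_eq', if_pos h1]

end StrictlyUpperTriangular

section BooleanMatrices

variable {ι : Type*}

def toNatMatrix (A : Matrix ι ι Bool) : Matrix ι ι ℕ :=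
  of fun i j => if A i j then 1 else 0

theorem toNatMatrix_eq_zero_of_not_lt [Preorder ι] {A : Matrix ι ι Bool}
    (hA : ∀ i j, A i j = true → i < j) : ∀ i j, ¬i < j → toNatMatrix A i j = 0 := by
  intro i j hij
  simp [toNatMatrix, mt (hA i j) hij]

variable [DecidableEq ι]

def flipEntry (a b : ι) (A : Matrix ι ι Bool) : Matrix ι ι Bool :=
  of fun i j => if i = a ∧ j = b then !A i j else A i j

theorem flipEntry_flipEntry (a b : ι) (A : Matrix ι ι Bool) :
    flipEntry a b (flipEntry a b A) = A := by
  ext i j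
  by_cases h : i = a ∧ j = b <;> simp [flipEntry, h]

variable {a b : ι} {A : Matrix ι ι Bool}

theorem flipEntry_strictUpper [Preorder ι] (hab : a < b) (hA : ∀ i j, A i j = true → i < j) :
    ∀ i j, flipEntry a b A i j = true → i < j := by
  intro i j hij
  by_cases h : i = a ∧ j = b
  · exact h.1 ▸ h.2 ▸ hab
  · exact hA i j (by simpa [flipEntry, h] using hij)

theorem toNatMatrix_flipEntry (h : A a b = false) :
    toNatMatrix (flipEntry a b A) = toNatMatrix A + single a b 1 := by
  ext i j
  by_cases hij : i = a ∧ j = b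
  · obtain ⟨rfl, rfl⟩ := hij
    simp [toNatMatrix, flipEntry, h]
  · have hji : ¬(a = i ∧ b = j) := fun h => hij ⟨h.1.symm, h.2.symm⟩
    simp only [toNatMatrix, flipEntry, of_apply, Matrix.add_apply, single_apply, if_neg hij,
      if_neg hji, add_zero]

end BooleanMatrices

def strictUpperBoolMatrixEquiv (ι : Type*) [LinearOrder ι] :
    {A : Matrix ι ι Bool // ∀ i j, A i j = true → i < j} ≃
      ({p : ι × ι // p.1 < p.2} → Bool) where
  toFun A p := A.1 p.1.1 p.1.2
  invFun f := ⟨of fun i j => if h : i < j then f ⟨(i, j), h⟩ else false, fun i j hij => by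
    by_contra h
    simp [h] at hij⟩
  left_inv A := by
    ext i j
    by_cases h : i < j
    · simp [h]
    · simpa [h] using mt (A.2 i j) h
  right_inv f := funext fun p => by simp [p.2]

theorem natCard_strictUpper_boolMatrix (ι : Type*) [Fintype ι] [LinearOrder ι] :
    Nat.card {A : Matrix ι ι Bool // ∀ i j, A i j = true → i < j} =
      2 ^ (Fintype.card ι).choose 2 := by
  rw [Nat.card_congr (strictUpperBoolMatrixEquiv ι), Nat.card_fun,
    Nat.card_eq_fintype_card (α := Bool), Fintype.card_bool, Nat.card_eq_fintype_card,
    Fintype.card_subtype, Fintype.card_product_filter_lt]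

theorem card_strictUpper_boolMatrix_fin (n : ℕ) :
    #{A : Matrix (Fin n) (Fin n) Bool | ∀ i j, A i j = true → i < j} = 2 ^ n.choose 2 := by
  rw [← Fintype.card_subtype, ← Nat.card_eq_fintype_card, natCard_strictUpper_boolMatrix,
    Fintype.card_fin]

section PathCount

variable {n : ℕ} {a b : Fin n} {A : Matrix (Fin n) (Fin n) Bool}

/-- `(toNatMatrix A ^ k) a b` counts the paths of length `k`, and no path is longer than `n - 1`. -/
def pathCount (A : Matrix (Fin n) (Fin n) Bool) (a b : Fin n) : ℕ :=
  ∑ k ∈ Icc 1 (n - 1), (toNatMatrix A ^ k) a b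

theorem pathCount_flipEntry (hA : ∀ i j, A i j = true → i < j) (ha : IsBot a) (hb : IsTop b)
    (hab : a < b) (h : A a b = false) :
    pathCount (flipEntry a b A) a b = pathCount A a b + 1 := by
  rw [pathCount, toNatMatrix_flipEntry h]
  exact sum_pow_add_single_apply (toNatMatrix_eq_zero_of_not_lt hA) ha hb hab.ne 1
    (by simp) (mem_Icc.mpr ⟨le_rfl, by omega⟩)

theorem even_pathCount_flipEntry_iff (hA : ∀ i j, A i j = true → i < j) (ha : IsBot a)
    (hb : IsTop b) (hab : a < b) :
    Even (pathCount (flipEntry a b A) a b) ↔ ¬Even (pathCount A a b) := by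
  cases h : A a b
  · rw [pathCount_flipEntry hA ha hb hab h, Nat.even_add_one]
  · have hflip : flipEntry a b A a b = false := by simp [flipEntry, h]
    have := pathCount_flipEntry (flipEntry_strictUpper hab hA) ha hb hab hflip
    rw [flipEntry_flipEntry] at this
    rw [this, Nat.even_add_one, not_not]

theorem card_filter_odd_pathCount_eq_card_filter_even (ha : IsBot a) (hb : IsTop b)
    (hab : a < b) :
    #{A : Matrix (Fin n) (Fin n) Bool | (∀ i j, A i j = true → i < j) ∧
        Odd (pathCount A a b)} =
      #{A : Matrix (Fin n) (Fin n) Bool | (∀ i j, A i j = true → i < j) ∧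
        Even (pathCount A a b)} := by
  refine card_nbij' (flipEntry a b) (flipEntry a b) ?_ ?_ (fun A _ => flipEntry_flipEntry a b A)
    (fun A _ => flipEntry_flipEntry a b A)
  · intro A hA
    simp only [mem_coe, mem_filter, mem_univ, true_and] at hA ⊢
    refine ⟨flipEntry_strictUpper hab hA.1, ?_⟩
    rw [even_pathCount_flipEntry_iff hA.1 ha hb hab, Nat.not_even_iff_odd]
    exact hA.2
  · intro A hA
    simp only [mem_coe, mem_filter, mem_univ, true_and] at hA ⊢
    refine ⟨flipEntry_strictUpper hab hA.1, ?_⟩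
    rw [← Nat.not_even_iff_odd, even_pathCount_flipEntry_iff hA.1 ha hb hab, not_not]
    exact hA.2

theorem card_filter_odd_pathCount (ha : IsBot a) (hb : IsTop b) (hab : a < b) :
    #{A : Matrix (Fin n) (Fin n) Bool | (∀ i j, A i j = true → i < j) ∧
        Odd (pathCount A a b)} =
      2 ^ (n.choose 2 - 1) := by
  have hpairs : 1 ≤ n.choose 2 := Nat.choose_pos (by omega)
  have htotal := card_filter_and_odd_add_card_filter_and_even univ
    (fun A : Matrix (Fin n) (Fin n) Bool => ∀ i j, A i j = true → i < j) (pathCount · a b)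
  rw [← card_filter_odd_pathCount_eq_card_filter_even ha hb hab, card_strictUpper_boolMatrix_fin,
    ← Nat.sub_add_cancel hpairs, pow_succ] at htotal
  omega

end PathCount

/-- Counting claim in the proof of Theorem 4.10 ('𝔇 is half-randomizing'): among
strictly upper-triangular `n × n` 0/1 matrices (monotone DAGs on vertices `0, …, n-1`,
encoded as Boolean matrices `A` with `A i j = true → i < j`), the number of matrices for
which the number of directed paths from vertex `0` to vertex `n-1`, namely
`∑_{k=1}^{n-1} (A^k)_{0,n-1}` over `ℕ`, is odd equals the number of matrices for which
it is even, and both counts equal `2^(n(n-1)/2 - 1)`. -/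
theorem stmt7 (n : ℕ) (hn : 2 ≤ n) :
    ((Finset.univ : Finset (Matrix (Fin n) (Fin n) Bool)).filter
        (fun A => (∀ i j : Fin n, A i j = true → i < j) ∧
          Odd (∑ k ∈ Finset.Icc 1 (n - 1),
            ((Matrix.of fun i j : Fin n => if A i j then (1 : ℕ) else 0) ^ k)
              (⟨0, by omega⟩ : Fin n) (⟨n - 1, by omega⟩ : Fin n)))).card =
      ((Finset.univ : Finset (Matrix (Fin n) (Fin n) Bool)).filter
        (fun A => (∀ i j : Fin n, A i j = true → i < j) ∧
          Even (∑ k ∈ Finset.Icc 1 (n - 1),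
            ((Matrix.of fun i j : Fin n => if A i j then (1 : ℕ) else 0) ^ k)
              (⟨0, by omega⟩ : Fin n) (⟨n - 1, by omega⟩ : Fin n)))).card ∧
    ((Finset.univ : Finset (Matrix (Fin n) (Fin n) Bool)).filter
        (fun A => (∀ i j : Fin n, A i j = true → i < j) ∧
          Odd (∑ k ∈ Finset.Icc 1 (n - 1),
            ((Matrix.of fun i j : Fin n => if A i j then (1 : ℕ) else 0) ^ k)
              (⟨0, by omega⟩ : Fin n) (⟨n - 1, by omega⟩ : Fin n)))).card =
      2 ^ (n * (n - 1) / 2 - 1) := by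
  have ha : IsBot (⟨0, by omega⟩ : Fin n) := fun i => Nat.zero_le i
  have hb : IsTop (⟨n - 1, by omega⟩ : Fin n) := fun j => Nat.le_sub_one_of_lt j.isLt
  have hab : (⟨0, by omega⟩ : Fin n) < ⟨n - 1, by omega⟩ := Fin.mk_lt_mk.mpr (by omega)
  rw [← Nat.choose_two_right]
  exact ⟨card_filter_odd_pathCount_eq_card_filter_even ha hb hab,
    card_filter_odd_pathCount ha hb hab⟩
end
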